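/- arXiv:cs/0005031 — 7 statements merged into one kernel-verified Lean document; each statement's English description precedes it below -/
import Mathlib

section
/- In any algebraic conditional plausibility space, for every d in the range of Pl: (a) d ⊗ ⊤ = d; (b) if d ≠ ⊥ then ⊤ ⊗ d = d; (c) if d ≠ ⊥ then ⊥ ⊗ d = ⊥. -/
/-- Pl-determined domain of ⊗: pairs (Pl(U | V ∩ V'), Pl(V | V')). -/
def DomMul {W D : Type*} (F F' : Set (Set W)) (Pl : Set W → Set W → D) (a c : D) : Prop :=
  ∃ U V V', U ∈ F ∧ V ∈ F ∧ V' ∈ F' ∧ V ∩ V' ∈ F' ∧ Pl U (V ∩ V') = a ∧ Pl V V' = c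

/-- Pl-determined domain of ⊕: pairs (Pl(U₁|V), Pl(U₂|V)) with U₁, U₂ disjoint. -/
def DomAdd {W D : Type*} (F F' : Set (Set W)) (Pl : Set W → Set W → D) (a b : D) : Prop :=
  ∃ U₁ U₂ V, U₁ ∈ F ∧ U₂ ∈ F ∧ V ∈ F' ∧ Disjoint U₁ U₂ ∧ Pl U₁ V = a ∧ Pl U₂ V = b

/-- An algebraic conditional plausibility space. -/
structure AlgCPS (W : Type*) (D : Type*) [PartialOrder D] [BoundedOrder D] where
  F : Set (Set W)
  F' : Set (Set W)
  Pl : Set W → Set W → D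
  oplus : D → D → D
  otimes : D → D → D
  F_univ : Set.univ ∈ F
  F_compl : ∀ U ∈ F, Uᶜ ∈ F
  F_union : ∀ U ∈ F, ∀ V ∈ F, U ∪ V ∈ F
  F'_nonempty : F'.Nonempty
  F'_subset : F' ⊆ F
  F'_superset : ∀ V ∈ F', ∀ V' ∈ F, V ⊆ V' → V' ∈ F'
  cpl1 : ∀ V ∈ F', Pl ∅ V = ⊥
  cpl2 : ∀ V ∈ F', Pl Set.univ V = ⊤
  cpl3 : ∀ U U' V, U ∈ F → U' ∈ F → V ∈ F' → U ⊆ U' → Pl U V ≤ Pl U' V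
  cpl4 : ∀ U V, U ∈ F → V ∈ F' → Pl U V = Pl (U ∩ V) V
  acc4 : ∀ U V, U ∈ F → V ∈ F' → Pl U V ≠ ⊥ → U ∩ V ∈ F'
  alg1 : ∀ U U' V, U ∈ F → U' ∈ F → V ∈ F' → Disjoint U U' →
    Pl (U ∪ U') V = oplus (Pl U V) (Pl U' V)
  alg2 : ∀ U V V', U ∈ F → V ∈ F → V' ∈ F' → V ∩ V' ∈ F' →
    Pl (U ∩ V) V' = otimes (Pl U (V ∩ V')) (Pl V V')
  alg3 : ∀ a b₁ b₂ : D, DomMul F F' Pl a b₁ → DomMul F F' Pl a b₂ →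
    DomMul F F' Pl a (oplus b₁ b₂) → DomAdd F F' Pl b₁ b₂ →
    DomAdd F F' Pl (otimes a b₁) (otimes a b₂) →
    otimes a (oplus b₁ b₂) = oplus (otimes a b₁) (otimes a b₂)
  alg4 : ∀ a b c : D, DomMul F F' Pl a c → DomMul F F' Pl b c →
    otimes a c ≤ otimes b c → c ≠ ⊥ → a ≤ b

/-- d is in the range of Pl. -/
def AlgCPS.InRange {W D : Type*} [PartialOrder D] [BoundedOrder D]
    (S : AlgCPS W D) (d : D) : Prop :=
  ∃ U V, U ∈ S.F ∧ V ∈ S.F' ∧ S.Pl U V = d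

/-- in any algebraic cps, for d in the range of Pl:
(a) d ⊗ ⊤ = d; (b) if d ≠ ⊥ then ⊤ ⊗ d = d; (c) if d ≠ ⊥ then ⊥ ⊗ d = ⊥. -/
theorem otimes_top_bot {W D : Type*} [PartialOrder D] [BoundedOrder D]
    (S : AlgCPS W D) (d : D) (hd : S.InRange d) :
    S.otimes d ⊤ = d ∧ (d ≠ ⊥ → S.otimes ⊤ d = d) ∧ (d ≠ ⊥ → S.otimes ⊥ d = ⊥) := by
  obtain ⟨U, V, hU, hV, hPl⟩ := hd
  have hVF : V ∈ S.F := S.F'_subset hV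
  have hunivV : Set.univ ∩ V ∈ S.F' := by rwa [Set.univ_inter]
  have hempty : (∅ : Set W) ∈ S.F := by
    have := S.F_compl _ S.F_univ; rwa [Set.compl_univ] at this
  refine ⟨?_, ?_, ?_⟩
  · have h := S.alg2 U Set.univ V hU S.F_univ hV hunivV
    rw [Set.inter_univ, Set.univ_inter, hPl, S.cpl2 V hV] at h
    exact h.symm
  · intro hdne
    have hUV : U ∩ V ∈ S.F' := S.acc4 U V hU hV (hPl ▸ hdne)
    have h := S.alg2 Set.univ U V S.F_univ hU hV hUV
    rw [Set.univ_inter, hPl, S.cpl2 _ hUV] at h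
    exact h.symm
  · intro hdne
    have hUV : U ∩ V ∈ S.F' := S.acc4 U V hU hV (hPl ▸ hdne)
    have h := S.alg2 ∅ U V hempty hU hV hUV
    rw [Set.empty_inter, hPl, S.cpl1 _ hUV, S.cpl1 _ hV] at h
    exact h.symm
end

section
/- A standard algebraic conditional plausibility space whose ⊗ operation is monotonic (d ≤ d' and e ≤ e' imply d ⊗ e ≤ d' ⊗ e') and satisfies the strong cancellation property Alg4' (a ⊗ c ≤ b ⊗ c and c ≠ ⊥ imply a ≤ b, for all a,b,c) satisfies CPl5: for V ∩ V' ∈ F', Pl(U | V ∩ V') ≤ Pl(U' | V ∩ V') iff Pl(U ∩ V | V') ≤ Pl(U' ∩ V | V'). -/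
/-- a standard algebraic cps with monotonic ⊗ satisfying the strong
cancellation Alg4' satisfies CPl5. -/
theorem standard_monotonic_cpl5 {W D : Type*} [PartialOrder D] [BoundedOrder D]
    (S : AlgCPS W D)
    (hstd : S.F' = {A | A ∈ S.F ∧ S.Pl A Set.univ ≠ ⊥})
    (huniv : Set.univ ∈ S.F')
    (hmono : ∀ d d' e e' : D, d ≤ d' → e ≤ e' → S.otimes d e ≤ S.otimes d' e')
    (halg4' : ∀ a b c : D, S.otimes a c ≤ S.otimes b c → c ≠ ⊥ → a ≤ b) :
    ∀ U U' V V', U ∈ S.F → U' ∈ S.F → V ∈ S.F → V' ∈ S.F' → V ∩ V' ∈ S.F' →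
      (S.Pl U (V ∩ V') ≤ S.Pl U' (V ∩ V') ↔ S.Pl (U ∩ V) V' ≤ S.Pl (U' ∩ V) V') := by
  intro U U' V V' hU hU' hV hV' hVV'
  have hV'F : V' ∈ S.F := S.F'_subset hV'
  have hVinter : V' ∩ Set.univ = V' := Set.inter_univ V'
  have hempty : (∅ : Set W) ∈ S.F := by
    have := S.F_compl Set.univ S.F_univ
    simpa using this
  -- ⊥ ⊗ Pl(V'|univ) = ⊥
  have hbot : S.otimes ⊥ (S.Pl V' Set.univ) = ⊥ := by
    have h := S.alg2 ∅ V' Set.univ hempty hV'F huniv (by rw [hVinter]; exact hV')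
    rw [Set.empty_inter, hVinter, S.cpl1 V' hV', S.cpl1 Set.univ huniv] at h
    exact h.symm
  -- Pl(V|V') ≠ ⊥
  have hc : S.Pl V V' ≠ ⊥ := by
    intro h0
    have h := S.alg2 V V' Set.univ hV hV'F huniv (by rw [hVinter]; exact hV')
    rw [hVinter, h0] at h
    rw [hbot] at h
    have hne : S.Pl (V ∩ V') Set.univ ≠ ⊥ := (hstd ▸ hVV').2
    exact hne h
  have h1 := S.alg2 U V V' hU hV hV' hVV'
  have h2 := S.alg2 U' V V' hU' hV hV' hVV'
  rw [h1, h2]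
  constructor
  · intro h
    exact hmono _ _ _ _ h le_rfl
  · intro h
    exact halg4' _ _ _ h hc
end

section
/- In any nonstandard algebraic conditional plausibility space with ⊤ ≠ ⊥, there exists U ∈ F' with Pl(U|W) = ⊥ such that NI_Pl(U,U|W) holds (U does not interact with itself) but I_Pl(U,U|W) fails (U is not independent of itself). -/
/-- in a nonstandard algebraic cps with ⊤ ≠ ⊥ there is U ∈ F' with
Pl(U|W) = ⊥ such that NI_Pl(U,U|W) holds but I_Pl(U,U|W) fails. -/
theorem nonstandard_noninteraction_not_independence
    {W D : Type*} [PartialOrder D] [BoundedOrder D]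
    (S : AlgCPS W D)
    (hnonstd : S.F' ≠ {A | A ∈ S.F ∧ S.Pl A Set.univ ≠ ⊥})
    (huniv : Set.univ ∈ S.F')
    (htb : (⊤ : D) ≠ ⊥) :
    ∃ U ∈ S.F', S.Pl U Set.univ = ⊥ ∧
      S.Pl U Set.univ = S.otimes (S.Pl U Set.univ) (S.Pl U Set.univ) ∧
      S.Pl U U ≠ S.Pl U Set.univ := by

  -- Every A ∈ F with nonbottom plausibility is in F'
  have hsub : {A | A ∈ S.F ∧ S.Pl A Set.univ ≠ ⊥} ⊆ S.F' := by
    rintro A ⟨hAF, hAne⟩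
    have := S.acc4 A Set.univ hAF huniv hAne
    rwa [Set.inter_univ] at this
  -- get U ∈ F' with Pl U univ = ⊥
  obtain ⟨U, hU⟩ : ∃ U ∈ S.F', S.Pl U Set.univ = ⊥ := by
    by_contra h
    apply hnonstd
    apply Set.Subset.antisymm _ hsub
    intro A hA
    exact ⟨S.F'_subset hA, by push_neg at h; exact h A hA⟩
  obtain ⟨hUF', hUbot⟩ := hU
  have hUF : U ∈ S.F := S.F'_subset hUF'
  have hemptyF : (∅ : Set W) ∈ S.F := by
    have := S.F_compl Set.univ S.F_univ
    rwa [Set.compl_univ] at this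
  -- ⊥ = ⊥ ⊗ ⊥ via alg2
  have halg2 := S.alg2 ∅ U Set.univ hemptyF hUF huniv (by rwa [Set.inter_univ])
  rw [Set.empty_inter, Set.inter_univ, S.cpl1 Set.univ huniv, S.cpl1 U hUF', hUbot] at halg2
  -- Pl U U = ⊤
  have hUU : S.Pl U U = ⊤ := by
    have h4 := S.cpl4 Set.univ U S.F_univ hUF'
    rw [Set.univ_inter, S.cpl2 U hUF'] at h4
    exact h4.symm
  refine ⟨U, hUF', hUbot, by rw [hUbot]; exact halg2, ?_⟩
  rw [hUU, hUbot]
  exact htb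
end

section
/- Law of total plausibility: if (W,F,F',Pl) is an algebraic cps, A_1,...,A_n is a partition of W with each A_i ∈ F, X ∈ F, and Y ∈ F', then Pl(X|Y) = ⊕_{i : A_i ∩ Y ∈ F'} Pl(X | A_i ∩ Y) ⊗ Pl(A_i | Y). -/
open Classical

/-!
Split `X` along the partition as the disjoint union of the sets `X ∩ Aᵢ`, so that `Alg1` turns
`Pl(X|Y)` into the `⊕`-sum of the `Pl(X ∩ Aᵢ|Y)`. When `Aᵢ ∩ Y ∈ F'`, `Alg2` rewrites the term as
`Pl(X|Aᵢ ∩ Y) ⊗ Pl(Aᵢ|Y)`; otherwise `Acc4` forces it to be `⊥`, and such terms drop out of the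
sum because `⊥ ⊕ d = d` for every plausibility `d` (`Alg1` applied to `∅ ∪ U`).
-/

namespace AlgCPS

variable {W D : Type*} [PartialOrder D] [BoundedOrder D] (S : AlgCPS W D)

theorem empty_mem : ∅ ∈ S.F := by
  simpa using S.F_compl _ S.F_univ

theorem inter_mem {U V : Set W} (hU : U ∈ S.F) (hV : V ∈ S.F) : U ∩ V ∈ S.F := by
  simpa [Set.compl_union] using
    S.F_compl _ (S.F_union _ (S.F_compl _ hU) _ (S.F_compl _ hV))

theorem biUnion_list_mem {ι : Type*} {B : ι → Set W} (hB : ∀ i, B i ∈ S.F) (l : List ι) :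
    (⋃ i ∈ l, B i) ∈ S.F := by
  induction l with
  | nil => simpa using S.empty_mem
  | cons i l ih => simpa [Set.iUnion_or, Set.iUnion_union_distrib] using S.F_union _ (hB i) _ ih

theorem bot_oplus {d : D} (hd : S.InRange d) : S.oplus ⊥ d = d := by
  obtain ⟨U, V, hU, hV, rfl⟩ := hd
  simpa [S.cpl1 V hV] using (S.alg1 ∅ U V S.empty_mem hU hV (Set.empty_disjoint U)).symm

theorem pl_inter_eq_bot {X A Y : Set W} (hX : X ∈ S.F) (hA : A ∈ S.F) (hY : Y ∈ S.F')
    (hAY : A ∩ Y ∉ S.F') : S.Pl (X ∩ A) Y = ⊥ := by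
  by_contra hne
  have hXAY : X ∩ A ∩ Y ∈ S.F' := S.acc4 _ _ (S.inter_mem hX hA) hY hne
  exact hAY <| S.F'_superset _ hXAY _ (S.inter_mem hA (S.F'_subset hY))
    (Set.inter_subset_inter_left Y Set.inter_subset_right)

theorem pl_biUnion_list {ι : Type*} {B : ι → Set W} (hB : ∀ i, B i ∈ S.F) {V : Set W}
    (hV : V ∈ S.F') (p : ι → Prop) (f : ι → D) (hf : ∀ i, p i → S.Pl (B i) V = f i)
    (hnull : ∀ i, ¬p i → S.Pl (B i) V = ⊥) (l : List ι) (hl : l.Pairwise fun i j => Disjoint (B i) (B j)) :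
    S.Pl (⋃ i ∈ l, B i) V = (l.filter p).foldr (fun i acc => S.oplus (f i) acc) ⊥ := by
  induction l with
  | nil => simpa using S.cpl1 V hV
  | cons i l ih =>
    obtain ⟨hi, hl⟩ := List.pairwise_cons.1 hl
    have hunion : (⋃ j ∈ i :: l, B j) = B i ∪ ⋃ j ∈ l, B j := by
      simp [Set.iUnion_or, Set.iUnion_union_distrib]
    have hdisj : Disjoint (B i) (⋃ j ∈ l, B j) := Set.disjoint_iUnion₂_right.2 hi
    rw [hunion, S.alg1 _ _ _ (hB i) (S.biUnion_list_mem hB l) hV hdisj, ih hl]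
    by_cases hpi : p i
    · rw [List.filter_cons_of_pos (by simpa using hpi), List.foldr_cons, hf i hpi]
    · rw [List.filter_cons_of_neg (by simpa using hpi), hnull i hpi, ← ih hl]
      exact S.bot_oplus ⟨_, V, S.biUnion_list_mem hB l, hV, rfl⟩

end AlgCPS

/-- law of total plausibility.  If A₁,…,Aₙ is a measurable partition
of W, X ∈ F and Y ∈ F', then Pl(X|Y) is the ⊕-sum, over those i with Aᵢ ∩ Y ∈ F',
of Pl(X | Aᵢ ∩ Y) ⊗ Pl(Aᵢ | Y). -/
theorem total_plausibility {W D : Type*} [PartialOrder D] [BoundedOrder D]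
    (S : AlgCPS W D) (n : ℕ) (A : Fin n → Set W)
    (hmeas : ∀ i, A i ∈ S.F)
    (hdisj : ∀ i j, i ≠ j → Disjoint (A i) (A j))
    (hcover : (⋃ i, A i) = Set.univ)
    (X Y : Set W) (hX : X ∈ S.F) (hY : Y ∈ S.F') :
    S.Pl X Y =
      ((List.finRange n).filter (fun i => A i ∩ Y ∈ S.F')).foldr
        (fun i acc => S.oplus (S.otimes (S.Pl X (A i ∩ Y)) (S.Pl (A i) Y)) acc) ⊥ := by
  have hsplit : X = ⋃ i ∈ List.finRange n, X ∩ A i := by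
    simp [← Set.inter_iUnion, hcover]
  have hpairwise : (List.finRange n).Pairwise fun i j => Disjoint (X ∩ A i) (X ∩ A j) :=
    (List.nodup_finRange n).imp fun hij =>
      (hdisj _ _ hij).mono Set.inter_subset_right Set.inter_subset_right
  conv_lhs => rw [hsplit]
  exact S.pl_biUnion_list (fun i => S.inter_mem hX (hmeas i)) hY _ _
    (fun i hi => S.alg2 X (A i) Y hX (hmeas i) hY hi)
    (fun i hi => S.pl_inter_eq_bot hX (hmeas i) hY hi) _ hpairwise
end

section
/- The conditional possibility measure defined by Poss(U|V) = Poss(U ∩ V) if Poss(U ∩ V) < Poss(V), and Poss(U|V) = 1 if Poss(U ∩ V) = Poss(V) > 0 (undefined if Poss(V) = 0), forms an algebraic conditional plausibility space with ⊕ = max and ⊗ = min, where Alg4 holds on the Pl-determined domain Dom(⊗) = {(a,b) : a < b or a = 1} even though min does not satisfy the unrestricted cancellation law Alg4'. -/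
open Classical

/-- The conditional possibility measure Poss(U|V): Poss(U ∩ V) if
Poss(U ∩ V) < Poss(V), and 1 if Poss(U ∩ V) = Poss(V) > 0. -/
noncomputable def condPoss {W : Type*} (Poss : Set W → ℝ) (U V : Set W) : ℝ :=
  if Poss (U ∩ V) < Poss V then Poss (U ∩ V) else 1

/-- the conditional possibility measure Poss(U|V) forms an algebraic
cps with ⊕ = max and ⊗ = min, where Alg4 holds on the Pl-determined domain
Dom(⊗) = {(a,b) : a < b or a = 1}, even though min does not satisfy the
unrestricted cancellation law Alg4'. -/
theorem possibility_min_algebraic {W : Type*} [Fintype W] (Poss : Set W → ℝ)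
    (hrange : ∀ U : Set W, 0 ≤ Poss U ∧ Poss U ≤ 1)
    (hW : Poss Set.univ = 1) (hempty : Poss ∅ = 0)
    (hmax : ∀ U V : Set W, Poss (U ∪ V) = max (Poss U) (Poss V)) :
    -- CPl1
    (∀ V : Set W, 0 < Poss V → condPoss Poss ∅ V = 0) ∧
    -- CPl2
    (∀ V : Set W, 0 < Poss V → condPoss Poss Set.univ V = 1) ∧
    -- CPl3
    (∀ U U' V : Set W, 0 < Poss V → U ⊆ U' → condPoss Poss U V ≤ condPoss Poss U' V) ∧
    -- CPl4
    (∀ U V : Set W, 0 < Poss V → condPoss Poss U V = condPoss Poss (U ∩ V) V) ∧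
    -- Acc4
    (∀ U V : Set W, 0 < Poss V → condPoss Poss U V ≠ 0 → 0 < Poss (U ∩ V)) ∧
    -- Alg1 with ⊕ = max
    (∀ U U' V : Set W, 0 < Poss V → Disjoint U U' →
      condPoss Poss (U ∪ U') V = max (condPoss Poss U V) (condPoss Poss U' V)) ∧
    -- Alg2 with ⊗ = min
    (∀ U V V' : Set W, 0 < Poss (V ∩ V') →
      condPoss Poss (U ∩ V) V' = min (condPoss Poss U (V ∩ V')) (condPoss Poss V V')) ∧
    -- every Pl-determined pair is in Dom(⊗) = {(a,b) : a < b or a = 1}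
    (∀ U V V' : Set W, 0 < Poss (V ∩ V') →
      condPoss Poss U (V ∩ V') < condPoss Poss V V' ∨ condPoss Poss U (V ∩ V') = 1) ∧
    -- Alg4 on Dom(⊗)
    (∀ a b c : ℝ, 0 ≤ a → a ≤ 1 → 0 ≤ b → b ≤ 1 → 0 ≤ c → c ≤ 1 →
      (a < c ∨ a = 1) → (b < c ∨ b = 1) → min a c ≤ min b c → c ≠ 0 → a ≤ b) ∧
    -- but min does not satisfy the unrestricted cancellation law Alg4'
    ¬ (∀ a b c : ℝ, 0 ≤ a → a ≤ 1 → 0 ≤ b → b ≤ 1 → 0 ≤ c → c ≤ 1 →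
      min a c ≤ min b c → c ≠ 0 → a ≤ b) := by

  have hmono : ∀ U V : Set W, U ⊆ V → Poss U ≤ Poss V := by
    intro U V h
    have h2 := hmax U V
    rw [Set.union_eq_self_of_subset_left h] at h2
    rw [h2]; exact le_max_left _ _
  refine ⟨?_, ?_, ?_, ?_, ?_, ?_, ?_, ?_, ?_, ?_⟩
  · intro V hV
    simp [condPoss, hempty, hV]
  · intro V hV
    simp [condPoss]
  · intro U U' V hV hsub
    have hUV : Poss (U ∩ V) ≤ Poss (U' ∩ V) :=
      hmono _ _ (Set.inter_subset_inter_left V hsub)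
    unfold condPoss
    by_cases h2 : Poss (U' ∩ V) < Poss V
    · rw [if_pos h2, if_pos (lt_of_le_of_lt hUV h2)]; exact hUV
    · rw [if_neg h2]
      split_ifs with h1
      · exact (hrange _).2
      · exact le_refl 1
  · intro U V hV
    unfold condPoss
    rw [Set.inter_assoc, Set.inter_self]
  · intro U V hV hne
    by_contra h
    push_neg at h
    have h0 : Poss (U ∩ V) = 0 := le_antisymm h (hrange _).1
    apply hne
    unfold condPoss
    rw [h0, if_pos hV]
  · intro U U' V hV _
    have key : Poss ((U ∪ U') ∩ V) = max (Poss (U ∩ V)) (Poss (U' ∩ V)) := by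
      rw [Set.union_inter_distrib_right, hmax]
    have ha1 : Poss (U ∩ V) ≤ 1 := (hrange _).2
    have hb1 : Poss (U' ∩ V) ≤ 1 := (hrange _).2
    unfold condPoss
    rw [key]
    by_cases hac : Poss (U ∩ V) < Poss V <;> by_cases hbc : Poss (U' ∩ V) < Poss V
    · rw [if_pos (max_lt hac hbc), if_pos hac, if_pos hbc]
    · rw [if_neg (not_lt.mpr (le_trans (not_lt.mp hbc) (le_max_right _ _))),
        if_pos hac, if_neg hbc]
      exact (max_eq_right ha1).symm
    · rw [if_neg (not_lt.mpr (le_trans (not_lt.mp hac) (le_max_left _ _))),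
        if_neg hac, if_pos hbc]
      exact (max_eq_left hb1).symm
    · rw [if_neg (not_lt.mpr (le_trans (not_lt.mp hac) (le_max_left _ _))),
        if_neg hac, if_neg hbc]
      simp
  · intro U V V' hVV'
    have hab : Poss (U ∩ (V ∩ V')) ≤ Poss (V ∩ V') := hmono _ _ Set.inter_subset_right
    have hbc : Poss (V ∩ V') ≤ Poss V' := hmono _ _ Set.inter_subset_right
    have ha1 : Poss (U ∩ (V ∩ V')) ≤ 1 := (hrange _).2
    have hb1 : Poss (V ∩ V') ≤ 1 := (hrange _).2
    unfold condPoss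
    rw [Set.inter_assoc]
    split_ifs <;> rw [min_def] <;> split_ifs <;> linarith
  · intro U V V' hVV'
    have hab : Poss (U ∩ (V ∩ V')) ≤ Poss (V ∩ V') := hmono _ _ Set.inter_subset_right
    have hb1 : Poss (V ∩ V') ≤ 1 := (hrange _).2
    unfold condPoss
    split_ifs with h1 h2 <;> first | (right; rfl) | (left; linarith)
  · intro a b c ha0 ha1 hb0 hb1 hc0 hc1 hA hB hle hc
    rcases hA with h | h <;> rcases hB with h' | h' <;>
      rw [min_def, min_def] at hle <;> split_ifs at hle <;> linarith
  · intro h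
    have := h 1 (1/2) (1/2) (by norm_num) (by norm_num) (by norm_num) (by norm_num)
      (by norm_num) (by norm_num) (by norm_num [min_def]) (by norm_num)
    linarith
end

section
/- Symmetry and decomposition of plausibilistic conditional independence: for an algebraic cps and pairwise disjoint finite sets of random variables X, Y, Y', Z: (CIRV1) I(X,Y|Z) implies I(Y,X|Z), and (CIRV2) I(X, Y ∪ Y' | Z) implies I(X, Y | Z). -/
/-- An algebraic cps with commutative and associative ⊕ and ⊗, over a finite set of
worlds, with every set measurable (F = 2^W). -/
structure AlgCPSrv (W : Type*) (D : Type*) [PartialOrder D] [BoundedOrder D]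
    extends AlgCPS W D where
  F_all : F = Set.univ
  oplus_comm : ∀ a b : D, oplus a b = oplus b a
  oplus_assoc : ∀ a b c : D, oplus (oplus a b) c = oplus a (oplus b c)
  otimes_comm : ∀ a b : D, otimes a b = otimes b a
  otimes_assoc : ∀ a b c : D, otimes (otimes a b) c = otimes a (otimes b c)

/-- The event [X = x]: all worlds where every random variable in the finite set X
takes the value prescribed by the assignment x. -/
def rvEvent {W I : Type*} (f : I → W → ℕ) (X : Finset I) (x : I → ℕ) : Set W :=
  {w | ∀ i ∈ X, f i w = x i}

/-- Conditional independence of events with respect to a cpm. -/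
def IPl {W D : Type*} [PartialOrder D] [BoundedOrder D]
    (S : AlgCPS W D) (A B C : Set W) : Prop :=
  (B ∩ C ∈ S.F' → S.Pl A (B ∩ C) = S.Pl A C) ∧
  (A ∩ C ∈ S.F' → S.Pl B (A ∩ C) = S.Pl B C)

/-- Conditional independence of sets of random variables: I(X, Y | Z). -/
def IRV {W I D : Type*} [PartialOrder D] [BoundedOrder D]
    (S : AlgCPS W D) (f : I → W → ℕ) (X Y Z : Finset I) : Prop :=
  ∀ x y z : I → ℕ, IPl S (rvEvent f X x) (rvEvent f Y y) (rvEvent f Z z)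


section Helpers

variable {W D : Type*} [PartialOrder D] [BoundedOrder D]

lemma AlgCPSrv.memF (S : AlgCPSrv W D) (U : Set W) : U ∈ S.F := by
  rw [S.F_all]; trivial

lemma AlgCPSrv.F'up (S : AlgCPSrv W D) {V V' : Set W} (h : V ∈ S.F') (hs : V ⊆ V') :
    V' ∈ S.F' := S.F'_superset V h V' (S.memF V') hs

lemma AlgCPSrv.pl_self (S : AlgCPSrv W D) {V : Set W} (h : V ∈ S.F') : S.Pl V V = ⊤ := by
  have h4 := S.cpl4 Set.univ V (S.memF _) h
  rw [Set.univ_inter] at h4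
  rw [← h4, S.cpl2 V h]

lemma AlgCPSrv.pl_mono (S : AlgCPSrv W D) {U U' V : Set W} (h : V ∈ S.F') (hs : U ⊆ U') :
    S.Pl U V ≤ S.Pl U' V := S.cpl3 U U' V (S.memF _) (S.memF _) h hs

lemma AlgCPSrv.pl_bot (S : AlgCPSrv W D) {U V : Set W} (hV : V ∈ S.F') (h : U ∩ V ∉ S.F') :
    S.Pl U V = ⊥ := by
  by_contra hne
  exact h (S.acc4 U V (S.memF _) hV hne)

lemma AlgCPSrv.oplus_bot (S : AlgCPSrv W D) {a : D} {U V : Set W} (hV : V ∈ S.F')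
    (ha : S.Pl U V = a) : S.oplus a ⊥ = a := by
  have h1 := S.alg1 U ∅ V (S.memF _) (S.memF _) hV (Set.disjoint_empty U)
  rw [Set.union_empty, S.cpl1 V hV, ha] at h1
  exact h1.symm

lemma AlgCPSrv.otimes_top (S : AlgCPSrv W D) {a : D} {U V : Set W} (hV : V ∈ S.F')
    (ha : S.Pl U V = a) : S.otimes a ⊤ = a := by
  have h2 := S.alg2 U Set.univ V (S.memF _) (S.memF _) hV (by rw [Set.univ_inter]; exact hV)
  rw [Set.inter_univ, Set.univ_inter, S.cpl2 V hV, ha] at h2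
  exact h2.symm

lemma AlgCPSrv.alg2' (S : AlgCPSrv W D) {U V V' : Set W} (hV : V ∈ S.F') (hV' : V' ∈ S.F')
    (hs : V ⊆ V') : S.Pl (U ∩ V) V' = S.otimes (S.Pl U V) (S.Pl V V') := by
  have h2 := S.alg2 U V V' (S.memF _) (S.memF _) hV' (by rwa [Set.inter_eq_left.mpr hs])
  rwa [Set.inter_eq_left.mpr hs] at h2

/-- The engine: if A is independent (value a) of each atom of a disjoint family of
F'-events, then it is independent of their union. -/
lemma AlgCPSrv.engine (S : AlgCPSrv W D) {ι : Type*} [DecidableEq ι] (A : Set W) (a : D)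
    (B : ι → Set W) (hdisj : ∀ i j, i ≠ j → Disjoint (B i) (B j))
    (T : Finset ι) (hT : T.Nonempty)
    (hgood : ∀ i ∈ T, B i ∈ S.F' ∧ S.Pl A (B i) = a) :
    S.Pl A (⋃ i ∈ T, B i) = a := by
  induction hT using Finset.Nonempty.cons_induction with
  | singleton v =>
      have h := hgood v (Finset.mem_singleton_self v)
      simpa using h.2
  | cons v T' hvT' hT' ih =>
      have hv := hgood v (Finset.mem_cons_self v T')
      have hT'good : ∀ i ∈ T', B i ∈ S.F' ∧ S.Pl A (B i) = a := fun i hi =>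
        hgood i (Finset.mem_cons_of_mem hi)
      have IH := ih hT'good
      obtain ⟨v₁, hv₁⟩ := hT'
      have hE' : (⋃ i ∈ T', B i) ∈ S.F' :=
        S.F'up (hT'good v₁ hv₁).1 (Set.subset_biUnion_of_mem hv₁)
      have hcoverE : ⋃ i ∈ Finset.cons v T' hvT', B i = B v ∪ ⋃ i ∈ T', B i := by
        rw [Finset.cons_eq_insert, Finset.set_biUnion_insert]
      have hvE : B v ⊆ B v ∪ ⋃ i ∈ T', B i := Set.subset_union_left
      have hE'E : (⋃ i ∈ T', B i) ⊆ B v ∪ ⋃ i ∈ T', B i := Set.subset_union_right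
      have hE : (B v ∪ ⋃ i ∈ T', B i) ∈ S.F' := S.F'up hv.1 hvE
      have hd : Disjoint (B v) (⋃ i ∈ T', B i) := by
        simp only [Set.disjoint_iUnion_right]
        intro i hi
        exact hdisj v i (by rintro rfl; exact hvT' hi)
      have e₁ : S.Pl (A ∩ B v) (B v ∪ ⋃ i ∈ T', B i)
          = S.otimes a (S.Pl (B v) (B v ∪ ⋃ i ∈ T', B i)) := by
        rw [S.alg2' hv.1 hE hvE, hv.2]
      have e₂ : S.Pl (A ∩ ⋃ i ∈ T', B i) (B v ∪ ⋃ i ∈ T', B i)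
          = S.otimes a (S.Pl (⋃ i ∈ T', B i) (B v ∪ ⋃ i ∈ T', B i)) := by
        rw [S.alg2' hE' hE hE'E, IH]
      have esum : S.oplus (S.Pl (B v) (B v ∪ ⋃ i ∈ T', B i))
          (S.Pl (⋃ i ∈ T', B i) (B v ∪ ⋃ i ∈ T', B i)) = ⊤ := by
        have h1 := S.alg1 (B v) (⋃ i ∈ T', B i) (B v ∪ ⋃ i ∈ T', B i)
          (S.memF _) (S.memF _) hE hd
        rw [← h1, S.pl_self hE]
      have d1 : DomMul S.F S.F' S.Pl a (S.Pl (B v) (B v ∪ ⋃ i ∈ T', B i)) :=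
        ⟨A, B v, B v ∪ ⋃ i ∈ T', B i, S.memF _, S.memF _, hE,
          by rw [Set.inter_eq_left.mpr hvE]; exact hv.1,
          by rw [Set.inter_eq_left.mpr hvE]; exact hv.2, rfl⟩
      have d2 : DomMul S.F S.F' S.Pl a (S.Pl (⋃ i ∈ T', B i) (B v ∪ ⋃ i ∈ T', B i)) :=
        ⟨A, ⋃ i ∈ T', B i, B v ∪ ⋃ i ∈ T', B i, S.memF _, S.memF _, hE,
          by rw [Set.inter_eq_left.mpr hE'E]; exact hE',
          by rw [Set.inter_eq_left.mpr hE'E]; exact IH, rfl⟩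
      have d3 : DomMul S.F S.F' S.Pl a (S.oplus (S.Pl (B v) (B v ∪ ⋃ i ∈ T', B i))
          (S.Pl (⋃ i ∈ T', B i) (B v ∪ ⋃ i ∈ T', B i))) :=
        ⟨A, B v, B v, S.memF _, S.memF _, hv.1,
          by rw [Set.inter_self]; exact hv.1,
          by rw [Set.inter_self]; exact hv.2,
          by rw [S.pl_self hv.1]; exact esum.symm⟩
      have dA1 : DomAdd S.F S.F' S.Pl (S.Pl (B v) (B v ∪ ⋃ i ∈ T', B i))
          (S.Pl (⋃ i ∈ T', B i) (B v ∪ ⋃ i ∈ T', B i)) :=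
        ⟨B v, ⋃ i ∈ T', B i, B v ∪ ⋃ i ∈ T', B i, S.memF _, S.memF _, hE, hd, rfl, rfl⟩
      have dA2 : DomAdd S.F S.F' S.Pl
          (S.otimes a (S.Pl (B v) (B v ∪ ⋃ i ∈ T', B i)))
          (S.otimes a (S.Pl (⋃ i ∈ T', B i) (B v ∪ ⋃ i ∈ T', B i))) :=
        ⟨A ∩ B v, A ∩ ⋃ i ∈ T', B i, B v ∪ ⋃ i ∈ T', B i, S.memF _, S.memF _, hE,
          hd.mono Set.inter_subset_right Set.inter_subset_right, e₁, e₂⟩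
      have h3 := S.alg3 _ _ _ d1 d2 d3 dA1 dA2
      rw [hcoverE]
      calc S.Pl A (B v ∪ ⋃ i ∈ T', B i)
          = S.Pl (A ∩ (B v ∪ ⋃ i ∈ T', B i)) (B v ∪ ⋃ i ∈ T', B i) :=
            S.cpl4 A _ (S.memF _) hE
        _ = S.Pl ((A ∩ B v) ∪ (A ∩ ⋃ i ∈ T', B i)) (B v ∪ ⋃ i ∈ T', B i) := by
            rw [Set.inter_union_distrib_left]
        _ = S.oplus (S.Pl (A ∩ B v) (B v ∪ ⋃ i ∈ T', B i))
              (S.Pl (A ∩ ⋃ i ∈ T', B i) (B v ∪ ⋃ i ∈ T', B i)) :=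
            S.alg1 _ _ _ (S.memF _) (S.memF _) hE
              (hd.mono Set.inter_subset_right Set.inter_subset_right)
        _ = S.oplus (S.otimes a (S.Pl (B v) (B v ∪ ⋃ i ∈ T', B i)))
              (S.otimes a (S.Pl (⋃ i ∈ T', B i) (B v ∪ ⋃ i ∈ T', B i))) := by
            rw [e₁, e₂]
        _ = S.otimes a (S.oplus (S.Pl (B v) (B v ∪ ⋃ i ∈ T', B i))
              (S.Pl (⋃ i ∈ T', B i) (B v ∪ ⋃ i ∈ T', B i))) := h3.symm
        _ = S.otimes a ⊤ := by rw [esum]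
        _ = a := S.otimes_top hv.1 hv.2

/-- A union of non-F' subevents of B has plausibility ⊥ given B. -/
lemma AlgCPSrv.badsum (S : AlgCPSrv W D) {ι : Type*} [DecidableEq ι] {B : Set W}
    (hB : B ∈ S.F') (Bf : ι → Set W)
    (hdisj : ∀ i j, i ≠ j → Disjoint (Bf i) (Bf j))
    (T : Finset ι) (hbad : ∀ i ∈ T, Bf i ⊆ B ∧ Bf i ∉ S.F') :
    S.Pl (⋃ i ∈ T, Bf i) B = ⊥ := by
  induction T using Finset.induction_on with
  | empty => simpa using S.cpl1 B hB
  | @insert v T' hvT' ih =>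
      have hd : Disjoint (Bf v) (⋃ i ∈ T', Bf i) := by
        simp only [Set.disjoint_iUnion_right]
        intro i hi
        exact hdisj v i (by rintro rfl; exact hvT' hi)
      have h1 := S.alg1 (Bf v) (⋃ i ∈ T', Bf i) B (S.memF _) (S.memF _) hB hd
      rw [Finset.set_biUnion_insert, h1,
        ih (fun i hi => hbad i (Finset.mem_insert_of_mem hi)),
        S.pl_bot hB (by
          rw [Set.inter_eq_left.mpr (hbad v (Finset.mem_insert_self v T')).1]
          exact (hbad v (Finset.mem_insert_self v T')).2)]
      exact S.oplus_bot hB (S.cpl1 B hB)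

/-- If each term of a disjoint union has the same plausibility given V₁ and V₂,
then so does the union. -/
lemma AlgCPSrv.plsum_cong (S : AlgCPSrv W D) {ι : Type*} [DecidableEq ι] {V₁ V₂ : Set W}
    (h₁ : V₁ ∈ S.F') (h₂ : V₂ ∈ S.F') (Bf : ι → Set W)
    (hdisj : ∀ i j, i ≠ j → Disjoint (Bf i) (Bf j)) (T : Finset ι)
    (hterm : ∀ i ∈ T, S.Pl (Bf i) V₁ = S.Pl (Bf i) V₂) :
    S.Pl (⋃ i ∈ T, Bf i) V₁ = S.Pl (⋃ i ∈ T, Bf i) V₂ := by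
  induction T using Finset.induction_on with
  | empty => simp [S.cpl1 V₁ h₁, S.cpl1 V₂ h₂]
  | @insert v T' hvT' ih =>
      have hd : Disjoint (Bf v) (⋃ i ∈ T', Bf i) := by
        simp only [Set.disjoint_iUnion_right]
        intro i hi
        exact hdisj v i (by rintro rfl; exact hvT' hi)
      rw [Finset.set_biUnion_insert,
        S.alg1 _ _ V₁ (S.memF _) (S.memF _) h₁ hd,
        S.alg1 _ _ V₂ (S.memF _) (S.memF _) h₂ hd,
        hterm v (Finset.mem_insert_self _ _),
        ih (fun i hi => hterm i (Finset.mem_insert_of_mem hi))]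

/-- Main lemma for the first clause of CIRV2. -/
lemma AlgCPSrv.mainA (S : AlgCPSrv W D) {ι : Type*} [DecidableEq ι] (A : Set W)
    {B : Set W} (hB : B ∈ S.F') (a : D) (Bf : ι → Set W) (s : Finset ι)
    (hdisj : ∀ i j, i ≠ j → Disjoint (Bf i) (Bf j))
    (hcover : B = ⋃ i ∈ s, Bf i)
    (hgood : ∀ i ∈ s, Bf i ∈ S.F' → S.Pl A (Bf i) = a) :
    S.Pl A B = a := by
  classical
  set G : Finset ι := s.filter (fun i => Bf i ∈ S.F') with hGdef
  by_cases hGne : G.Nonempty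
  · obtain ⟨i₀, hi₀⟩ := hGne
    have hi₀s : i₀ ∈ s := (Finset.mem_filter.mp hi₀).1
    have hi₀F : Bf i₀ ∈ S.F' := (Finset.mem_filter.mp hi₀).2
    have hi₀a : S.Pl A (Bf i₀) = a := hgood i₀ hi₀s hi₀F
    have hsG : G ∪ s \ G = s := Finset.union_sdiff_of_subset (Finset.filter_subset _ s)
    have hsplit : B = (⋃ i ∈ G, Bf i) ∪ ⋃ i ∈ s \ G, Bf i := by
      rw [← Finset.set_biUnion_union, hsG, hcover]
    have hBGsub : (⋃ i ∈ G, Bf i) ⊆ B := hsplit ▸ Set.subset_union_left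
    have hBG : (⋃ i ∈ G, Bf i) ∈ S.F' := S.F'up hi₀F (Set.subset_biUnion_of_mem hi₀)
    have hbadbot : S.Pl (⋃ i ∈ s \ G, Bf i) B = ⊥ := by
      refine S.badsum hB Bf hdisj (s \ G) (fun i hi => ⟨?_, ?_⟩)
      · rw [hcover]
        exact Set.subset_biUnion_of_mem (Finset.mem_sdiff.mp hi).1
      · intro hF
        exact (Finset.mem_sdiff.mp hi).2
          (Finset.mem_filter.mpr ⟨(Finset.mem_sdiff.mp hi).1, hF⟩)
    have hdGb : Disjoint (⋃ i ∈ G, Bf i) (⋃ i ∈ s \ G, Bf i) := by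
      simp only [Set.disjoint_iUnion_right, Set.disjoint_iUnion_left]
      intro i hi j hj
      exact hdisj j i (by rintro rfl; exact (Finset.mem_sdiff.mp hi).2 hj)
    have hGtop : S.Pl (⋃ i ∈ G, Bf i) B = ⊤ := by
      have h1 := S.alg1 (⋃ i ∈ G, Bf i) (⋃ i ∈ s \ G, Bf i) B (S.memF _) (S.memF _) hB hdGb
      rw [← hsplit, S.pl_self hB, hbadbot,
        S.oplus_bot hB (rfl : S.Pl (⋃ i ∈ G, Bf i) B = _)] at h1
      exact h1.symm
    have hPlAG : S.Pl A (⋃ i ∈ G, Bf i) = a :=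
      S.engine A a Bf hdisj G ⟨i₀, hi₀⟩ (fun i hi => ⟨(Finset.mem_filter.mp hi).2,
        hgood i (Finset.mem_filter.mp hi).1 (Finset.mem_filter.mp hi).2⟩)
    have hbadA : S.Pl (A ∩ ⋃ i ∈ s \ G, Bf i) B = ⊥ :=
      le_antisymm (hbadbot ▸ S.pl_mono hB Set.inter_subset_right) bot_le
    calc S.Pl A B = S.Pl (A ∩ B) B := S.cpl4 A B (S.memF _) hB
      _ = S.Pl ((A ∩ ⋃ i ∈ G, Bf i) ∪ (A ∩ ⋃ i ∈ s \ G, Bf i)) B := by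
          rw [show A ∩ B = (A ∩ ⋃ i ∈ G, Bf i) ∪ (A ∩ ⋃ i ∈ s \ G, Bf i) by
            rw [hsplit, Set.inter_union_distrib_left]]
      _ = S.oplus (S.Pl (A ∩ ⋃ i ∈ G, Bf i) B) (S.Pl (A ∩ ⋃ i ∈ s \ G, Bf i) B) :=
          S.alg1 _ _ B (S.memF _) (S.memF _) hB
            (hdGb.mono Set.inter_subset_right Set.inter_subset_right)
      _ = S.oplus (S.otimes (S.Pl A (⋃ i ∈ G, Bf i)) (S.Pl (⋃ i ∈ G, Bf i) B)) ⊥ := by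
          rw [S.alg2' hBG hB hBGsub, hbadA]
      _ = S.oplus (S.otimes a ⊤) ⊥ := by rw [hPlAG, hGtop]
      _ = S.oplus a ⊥ := by rw [S.otimes_top hi₀F hi₀a]
      _ = a := S.oplus_bot hi₀F hi₀a
  · have hallbad : ∀ i ∈ s, Bf i ⊆ B ∧ Bf i ∉ S.F' := fun i hi =>
      ⟨hcover ▸ Set.subset_biUnion_of_mem hi,
        fun hF => hGne ⟨i, Finset.mem_filter.mpr ⟨hi, hF⟩⟩⟩
    have hBbot : S.Pl B B = ⊥ := by
      have h1 := S.badsum hB Bf hdisj s hallbad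
      rwa [← hcover] at h1
    have htb : (⊤ : D) = ⊥ := by rw [← S.pl_self hB, hBbot]
    have h1 : S.Pl A B = ⊥ := le_bot_iff.mp (htb ▸ (le_top : S.Pl A B ≤ ⊤))
    have h2 : a = ⊥ := le_bot_iff.mp (htb ▸ (le_top : a ≤ ⊤))
    rw [h1, h2]

end Helpers

/-- symmetry (CIRV1) and decomposition (CIRV2) of plausibilistic
conditional independence for algebraic cps's. -/
theorem cirv1_cirv2 {W I D : Type*} [Fintype W] [DecidableEq I] [PartialOrder D] [BoundedOrder D]
    (S : AlgCPSrv W D) (f : I → W → ℕ) (X Y Y' Z : Finset I)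
    (hXY : Disjoint X Y) (hXY' : Disjoint X Y') (hXZ : Disjoint X Z)
    (hYY' : Disjoint Y Y') (hYZ : Disjoint Y Z) (hY'Z : Disjoint Y' Z) :
    (IRV S.toAlgCPS f X Y Z → IRV S.toAlgCPS f Y X Z) ∧
    (IRV S.toAlgCPS f X (Y ∪ Y') Z → IRV S.toAlgCPS f X Y Z) := by
  classical
  constructor
  · intro h a b c
    exact ⟨(h b a c).2, (h b a c).1⟩
  · intro h xv yv zv
    set yh : ({i // i ∈ Y'} → ℕ) → I → ℕ :=
      fun σ i => if hi : i ∈ Y' then σ ⟨i, hi⟩ else yv i with hyhdef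
    set E : ({i // i ∈ Y'} → ℕ) → Set W := fun σ => rvEvent f (Y ∪ Y') (yh σ) with hEdef
    set s : Finset ({i // i ∈ Y'} → ℕ) :=
      Finset.image (fun w : W => fun i : {i // i ∈ Y'} => f i.1 w) Finset.univ with hsdef
    have hEsubBY : ∀ σ, E σ ⊆ rvEvent f Y yv := by
      intro σ w hw i hi
      have h1 := hw i (Finset.mem_union_left Y' hi)
      rw [h1]
      simp only [hyhdef]
      rw [dif_neg (Finset.disjoint_left.mp hYY' hi)]
    have hcover : rvEvent f Y yv = ⋃ σ ∈ s, E σ := by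
      ext w
      constructor
      · intro hw
        refine Set.mem_biUnion (Finset.mem_image_of_mem _ (Finset.mem_univ w)) ?_
        intro i hi
        by_cases hY' : i ∈ Y'
        · simp only [hyhdef]
          rw [dif_pos hY']
        · have hiY : i ∈ Y := (Finset.mem_union.mp hi).resolve_right hY'
          simp only [hyhdef]
          rw [dif_neg hY']
          exact hw i hiY
      · intro hw
        simp only [Set.mem_iUnion] at hw
        obtain ⟨σ, _, hwE⟩ := hw
        exact hEsubBY σ hwE
    have hdisjE : ∀ σ σ' : ({i // i ∈ Y'} → ℕ), σ ≠ σ' → Disjoint (E σ) (E σ') := by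
      intro σ σ' hne
      rw [Set.disjoint_left]
      intro w hw hw'
      apply hne
      funext i
      have h1 := hw i.1 (Finset.mem_union_right Y i.2)
      have h2 := hw' i.1 (Finset.mem_union_right Y i.2)
      simp only [hyhdef] at h1 h2
      rw [dif_pos i.2] at h1 h2
      exact h1.symm.trans h2
    constructor
    · intro hBC
      have hcover2 : rvEvent f Y yv ∩ rvEvent f Z zv = ⋃ σ ∈ s, (E σ ∩ rvEvent f Z zv) := by
        rw [hcover]
        ext w
        simp only [Set.mem_inter_iff, Set.mem_iUnion]
        tauto
      refine S.mainA (rvEvent f X xv) hBC (S.Pl (rvEvent f X xv) (rvEvent f Z zv))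
        (fun σ => E σ ∩ rvEvent f Z zv) s
        (fun σ σ' hne => (hdisjE σ σ' hne).mono Set.inter_subset_left Set.inter_subset_left)
        hcover2 (fun σ _ hF => (h xv (yh σ) zv).1 hF)
    · intro hAC
      have hC : rvEvent f Z zv ∈ S.F' := S.F'up hAC Set.inter_subset_right
      have h1 := S.plsum_cong hAC hC E hdisjE s (fun σ _ => (h xv (yh σ) zv).2 hAC)
      rwa [← hcover] at h1
end

section
/- Conditional lower probability is not algebraic: there exist a finite set W, a finite set P of probability measures on W, and pairwise disjoint events U1, V1, U2, V2 such that P_*(U1) = P_*(V1), P_*(U2) = P_*(V2), but P_*(U1 ∪ U2) ≠ P_*(V1 ∪ V2); hence no binary operation ⊕ can satisfy P_*(A ∪ B) = P_*(A) ⊕ P_*(B) for all disjoint A, B. -/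
/-! Lower probability is a minimum over measures, so it is additive on a disjoint union only
when one measure minimizes both parts. With two measures on four points, U₁ = {0} and
U₂ = {2} are both minimized by μ₀, giving P_*(U₁ ∪ U₂) = 0 + 1/4, while V₁ = {1} and V₂ = {3}
are minimized by different measures and P_*(V₁ ∪ V₂) = 1/2, although the parts have the same
lower probabilities 0 and 1/4. -/

/-- The lower probability of the finite set of measures μ₀, …, μ_k on Fin n. -/
noncomputable def lowProb {n k : ℕ} (μ : Fin (k + 1) → Fin n → ℝ)
    (A : Finset (Fin n)) : ℝ :=
  Finset.univ.inf' Finset.univ_nonempty (fun j => ∑ w ∈ A, μ j w)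

theorem not_exists_union_op_of_ne {α β : Type*} [DecidableEq α] (f : Finset α → β)
    {U₁ V₁ U₂ V₂ : Finset α} (hU : Disjoint U₁ U₂) (hV : Disjoint V₁ V₂)
    (h₁ : f U₁ = f V₁) (h₂ : f U₂ = f V₂) (hne : f (U₁ ∪ U₂) ≠ f (V₁ ∪ V₂)) :
    ¬ ∃ op : β → β → β, ∀ A B, Disjoint A B → f (A ∪ B) = op (f A) (f B) := by
  rintro ⟨op, hop⟩
  exact hne (by rw [hop _ _ hU, hop _ _ hV, h₁, h₂])

theorem lowProb_fin_two {n : ℕ} (μ : Fin 2 → Fin n → ℝ) (A : Finset (Fin n)) :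
    lowProb μ A = min (∑ w ∈ A, μ 0 w) (∑ w ∈ A, μ 1 w) := by
  simp [lowProb, Fin.univ_succ]

noncomputable def exampleMeasures : Fin 2 → Fin 4 → ℝ :=
  ![![0, 1/2, 1/4, 1/4], ![1/4, 0, 1/4, 1/2]]

theorem exampleMeasures_isProbability (j : Fin 2) :
    (∀ w, 0 ≤ exampleMeasures j w) ∧ ∑ w, exampleMeasures j w = 1 := by
  fin_cases j <;>
    exact ⟨fun w => by fin_cases w <;> norm_num [exampleMeasures],
      by norm_num [exampleMeasures, Fin.sum_univ_four, Matrix.cons_val_two,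
        Matrix.cons_val_three]⟩

/-- conditional lower probability is not algebraic: there are a finite
set W, a finite set P of probability measures on W, and pairwise disjoint events
U₁, V₁, U₂, V₂ with P_*(U₁) = P_*(V₁), P_*(U₂) = P_*(V₂) but
P_*(U₁ ∪ U₂) ≠ P_*(V₁ ∪ V₂); hence no binary operation ⊕ satisfies
P_*(A ∪ B) = P_*(A) ⊕ P_*(B) for all disjoint A, B. -/
theorem lower_probability_not_algebraic :
    ∃ (n k : ℕ) (μ : Fin (k + 1) → Fin n → ℝ) (U₁ V₁ U₂ V₂ : Finset (Fin n)),
      (∀ j, (∀ w, 0 ≤ μ j w) ∧ ∑ w, μ j w = 1) ∧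
      Disjoint U₁ V₁ ∧ Disjoint U₁ U₂ ∧ Disjoint U₁ V₂ ∧
      Disjoint V₁ U₂ ∧ Disjoint V₁ V₂ ∧ Disjoint U₂ V₂ ∧
      lowProb μ U₁ = lowProb μ V₁ ∧ lowProb μ U₂ = lowProb μ V₂ ∧
      lowProb μ (U₁ ∪ U₂) ≠ lowProb μ (V₁ ∪ V₂) ∧
      ¬ ∃ op : ℝ → ℝ → ℝ, ∀ A B : Finset (Fin n), Disjoint A B →
          lowProb μ (A ∪ B) = op (lowProb μ A) (lowProb μ B) := by
  have hU : Disjoint ({0} : Finset (Fin 4)) {2} := by decide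
  have hV : Disjoint ({1} : Finset (Fin 4)) {3} := by decide
  have h₁ : lowProb exampleMeasures {0} = lowProb exampleMeasures {1} := by
    norm_num [lowProb_fin_two, exampleMeasures]
  have h₂ : lowProb exampleMeasures {2} = lowProb exampleMeasures {3} := by
    norm_num [lowProb_fin_two, exampleMeasures, Matrix.cons_val_two, Matrix.cons_val_three]
  have hne : lowProb exampleMeasures ({0} ∪ {2}) ≠ lowProb exampleMeasures ({1} ∪ {3}) := by
    norm_num +decide [lowProb_fin_two, exampleMeasures, Matrix.cons_val_two,
      Matrix.cons_val_three]
  exact ⟨4, 1, exampleMeasures, {0}, {1}, {2}, {3}, exampleMeasures_isProbability,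
    by decide, hU, by decide, by decide, hV, by decide, h₁, h₂, hne,
    not_exists_union_op_of_ne _ hU hV h₁ h₂ hne⟩
end
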